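/- arXiv:1907.03373 — 2 statements merged into one kernel-verified Lean document; each statement's English description precedes it below -/
import Mathlib

section
/- For integers m ≥ 1, n ≥ 2, and 1 ≤ k ≤ m/n, the partial binomial sum satisfies ∑_{l=0}^{k−1} C(m, l)·(1/(n−1))^l ≤ C(m, k−1)·(1/(n−1))^(k−1) · (m−k+2)/(m−nk+n+1). -/
/-! The terms `a l = C(m, l) (n - 1)^(-l)` grow at least geometrically up to `l = k - 1`: since
`C(m, l + 1) / C(m, l) = (m - l) / (l + 1)`, consecutive terms satisfy `a l ≤ r a (l + 1)` with
`r = (n - 1)(k - 1) / (m - k + 2) < 1`, so the sum is at most its last term times `1 / (1 - r)`. -/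

open Finset

theorem sum_range_succ_le_div_one_sub {K : Type*} [Field K] [LinearOrder K] [IsStrictOrderedRing K]
    {a : ℕ → K} {r : K} (hr₀ : 0 ≤ r) (hr₁ : r < 1) (ha₀ : 0 ≤ a 0) :
    ∀ k : ℕ, (∀ l < k, a l ≤ r * a (l + 1)) →
      ∑ l ∈ range (k + 1), a l ≤ a k / (1 - r)
  | 0, _ => by simpa using le_div_self ha₀ (sub_pos.2 hr₁) (sub_le_self 1 hr₀)
  | k + 1, h => by
    have hr : 0 < 1 - r := sub_pos.2 hr₁
    have ih := sum_range_succ_le_div_one_sub hr₀ hr₁ ha₀ k fun l hl => h l (by omega)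
    have hstep : a k / (1 - r) + a (k + 1) ≤ a (k + 1) / (1 - r) := by
      rw [div_add' _ _ _ hr.ne', div_le_div_iff_of_pos_right hr]
      linarith [h k k.lt_succ_self]
    rw [sum_range_succ]
    linarith

theorem Nat.choose_mul_succ_sub_le {m k l : ℕ} (hl : l < k) :
    m.choose l * (m + 1 - k) ≤ k * m.choose (l + 1) :=
  calc m.choose l * (m + 1 - k) ≤ m.choose l * (m - l) := Nat.mul_le_mul_left _ (by omega)
    _ = m.choose (l + 1) * (l + 1) := (Nat.choose_succ_right_eq m l).symm
    _ ≤ k * m.choose (l + 1) := by rw [mul_comm]; exact Nat.mul_le_mul_right _ hl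

theorem sum_range_choose_mul_pow_le (m k : ℕ) {x : ℝ} (hx : 0 < x)
    (hkx : k < ((m : ℝ) - k + 1) * x) :
    ∑ l ∈ range (k + 1), (m.choose l : ℝ) * x ^ l
      ≤ m.choose k * x ^ k / (1 - k / (((m : ℝ) - k + 1) * x)) := by
  have hmk : 0 < ((m : ℝ) - k + 1) * x := (Nat.cast_nonneg k).trans_lt hkx
  have hkm : k ≤ m + 1 := by
    have := (mul_pos_iff_of_pos_right hx).1 hmk
    exact_mod_cast (by linarith : (k : ℝ) ≤ m + 1)
  refine sum_range_succ_le_div_one_sub (by positivity) ((div_lt_one hmk).2 hkx) (by simp) k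
    fun l hl => ?_
  have hchoose : (m.choose l : ℝ) * ((m : ℝ) - k + 1) ≤ k * m.choose (l + 1) := by
    have := Nat.choose_mul_succ_sub_le (m := m) hl
    rw [← Nat.cast_le (α := ℝ)] at this
    push_cast [Nat.cast_sub hkm] at this
    linarith
  rw [div_mul_eq_mul_div, le_div_iff₀ hmk, pow_succ]
  calc (m.choose l : ℝ) * x ^ l * (((m : ℝ) - k + 1) * x)
      = (m.choose l : ℝ) * ((m : ℝ) - k + 1) * (x ^ l * x) := by ring
    _ ≤ k * m.choose (l + 1) * (x ^ l * x) := by gcongr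
    _ = k * (m.choose (l + 1) * (x ^ l * x)) := by ring

theorem stmt_5_general (m n k : ℕ) (hn : 2 ≤ n) (hk : 1 ≤ k) (hkm : n * k ≤ m) :
    ∑ l ∈ Finset.range k, (m.choose l : ℝ) * (1 / ((n : ℝ) - 1)) ^ l
      ≤ (m.choose (k - 1) : ℝ) * (1 / ((n : ℝ) - 1)) ^ (k - 1)
          * (((m : ℝ) - k + 2) / ((m : ℝ) - n * k + n + 1)) := by
  obtain ⟨j, rfl⟩ : ∃ j, k = j + 1 := ⟨k - 1, by omega⟩
  have hn' : (2 : ℝ) ≤ n := by exact_mod_cast hn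
  have hkm' : (n : ℝ) * (j + 1) ≤ m := by exact_mod_cast hkm
  have hc : 0 < (n : ℝ) - 1 := by linarith
  have hj : (j : ℝ) < ((m : ℝ) - j + 1) * (1 / ((n : ℝ) - 1)) := by
    rw [← div_eq_mul_one_div, lt_div_iff₀ hc]
    nlinarith
  have hmj : 0 < (m : ℝ) - j + 1 := by nlinarith
  convert sum_range_choose_mul_pow_le m j (by positivity) hj using 1
  push_cast
  rw [div_eq_mul_inv _ (1 - _)]
  congr 1
  field_simp
  ring

/-- For `m ≥ 1`, `n ≥ 2`, `1 ≤ k ≤ m/n`,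
`∑_{l=0}^{k-1} C(m,l) (1/(n-1))^l ≤ C(m,k-1) (1/(n-1))^(k-1) * (m-k+2)/(m-nk+n+1)`. -/
theorem stmt_5 (m n k : ℕ) (hm : 1 ≤ m) (hn : 2 ≤ n) (hk : 1 ≤ k) (hkm : n * k ≤ m) :
    ∑ l ∈ Finset.range k, (m.choose l : ℝ) * (1 / ((n : ℝ) - 1)) ^ l
      ≤ (m.choose (k - 1) : ℝ) * (1 / ((n : ℝ) - 1)) ^ (k - 1)
          * (((m : ℝ) - k + 2) / ((m : ℝ) - n * k + n + 1)) :=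
  stmt_5_general m n k hn hk hkm
end

section
/- Let p(m, f, d) = (mf)!/((⌊mf/d⌋!)^d) · (1/d)^(mf). With M users each sending F one-hot updates uniformly over d coordinates, independently, over K independent iterations, the probability that the coordinate-wise sums equal any fixed sequence s^1, ..., s^K (each with ℓ1-norm MF) is at most p(M, F, d)^K. -/
/-!
The observed vector of an iteration is the histogram of the map `[M] × [F] → [d]` sending each
draw to its coordinate. Permutations of the domain act transitively on the maps with a given
histogram `a`, with stabilizer `∏ i, Perm (fiber i)`, so by orbit–stabilizer exactly
`(MF)! / ∏ aᵢ!` maps have histogram `a`. With `q = ⌊MF/d⌋`, multiplying the inequalities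
`q! qᵃ ≤ a! q^q` over the parts gives `∏ aᵢ! ≥ (q!)^d`. Iterations contribute independent factors.
-/

open Finset Equiv MulAction Nat

theorem Nat.factorial_mul_pow_le_factorial_mul_pow (q a : ℕ) : q ! * q ^ a ≤ a ! * q ^ q := by
  rcases le_total q a with h | h
  · calc q ! * q ^ a = q ! * q ^ (a - q) * q ^ q := by
          rw [mul_assoc, ← pow_add, Nat.sub_add_cancel h]
      _ ≤ a ! * q ^ q := Nat.mul_le_mul_right _ (factorial_mul_pow_sub_le_factorial h)
  · have hq : q ! = a ! * q.descFactorial (q - a) := by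
      rw [← factorial_mul_descFactorial (Nat.sub_le q a), Nat.sub_sub_self h]
    calc q ! * q ^ a ≤ a ! * q ^ (q - a) * q ^ a := by
          rw [hq]
          exact Nat.mul_le_mul_right _ (Nat.mul_le_mul_left _ (descFactorial_le_pow q _))
      _ = a ! * q ^ q := by rw [mul_assoc, ← pow_add, Nat.sub_add_cancel h]

theorem Nat.factorial_sum_div_card_pow_le_prod_factorial {ι : Type*} [Fintype ι] (a : ι → ℕ) :
    ((∑ i, a i) / Fintype.card ι)! ^ Fintype.card ι ≤ ∏ i, (a i)! := by
  set q := (∑ i, a i) / Fintype.card ι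
  rcases Nat.eq_zero_or_pos q with hq | hq
  · rw [hq, factorial_zero, one_pow]
    exact one_le_prod' fun i _ => factorial_pos _
  have hpow : q ^ (q * Fintype.card ι) ≤ q ^ ∑ i, a i :=
    Nat.pow_le_pow_right hq (Nat.div_mul_le_self _ _)
  have hprod : q ! ^ Fintype.card ι * q ^ ∑ i, a i ≤ (∏ i, (a i)!) * q ^ (q * Fintype.card ι) := by
    have h := prod_le_prod' fun i (_ : i ∈ univ) => factorial_mul_pow_le_factorial_mul_pow q (a i)
    rwa [prod_mul_distrib, prod_mul_distrib, prod_const, prod_const, prod_pow_eq_pow_sum,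
      Finset.card_univ, ← pow_mul] at h
  exact Nat.le_of_mul_le_mul_right ((Nat.mul_le_mul_left _ hpow).trans hprod) (by positivity)

section Histogram

variable {X ι : Type*} [Fintype X] [DecidableEq ι]

/-- The sum over `x` of the one-hot vectors `e_{f x}`. -/
def histogram (f : X → ι) (i : ι) : ℕ := #{x | f x = i}

lemma histogram_eq_card_subtype (f : X → ι) (i : ι) :
    histogram f i = Fintype.card {x // f x = i} :=
  (Fintype.card_subtype _).symm

lemma sum_histogram [Fintype ι] (f : X → ι) : ∑ i, histogram f i = Fintype.card X :=
  (card_eq_sum_card_fiberwise fun x _ => mem_univ (f x)).symm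

lemma histogram_comp_perm (f : X → ι) (σ : Perm X) : histogram (f ∘ σ) = histogram f := by
  ext i
  simp only [histogram_eq_card_subtype]
  exact Fintype.card_congr (σ.subtypeEquiv fun _ => Iff.rfl)

lemma exists_perm_comp_eq_of_histogram_eq {f g : X → ι} (h : histogram f = histogram g) :
    ∃ σ : Perm X, g ∘ σ = f :=
  ⟨ofFiberEquiv fun i => Fintype.equivOfCardEq (by
      simpa only [histogram_eq_card_subtype] using congrFun h i),
    funext (ofFiberEquiv_map _)⟩

lemma orbit_domMulAct_eq (f : X → ι) :
    orbit (Perm X)ᵈᵐᵃ f = {g | histogram g = histogram f} := by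
  ext g
  constructor
  · rintro ⟨σ, rfl⟩
    exact histogram_comp_perm f _
  · intro h
    obtain ⟨σ, rfl⟩ := exists_perm_comp_eq_of_histogram_eq h
    exact ⟨DomMulAct.mk σ, rfl⟩

theorem card_histogram_eq_mul_prod_factorial [DecidableEq X] [Fintype ι] (f : X → ι) :
    Nat.card {g : X → ι // histogram g = histogram f} * ∏ i, (histogram f i)! =
      (Fintype.card X)! := by
  have hstab : Nat.card (stabilizer (Perm X)ᵈᵐᵃ f) = ∏ i, (histogram f i)! := by
    have e : stabilizer (Perm X)ᵈᵐᵃ f ≃ {σ : Perm X // f ∘ σ = f} :=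
      subtypeEquiv DomMulAct.mk.symm fun _ => DomMulAct.mem_stabilizer_iff
    rw [Nat.card_congr e, Nat.card_eq_fintype_card, DomMulAct.stabilizer_card f]
    simp only [histogram_eq_card_subtype]
  have horbit :
      Nat.card (orbit (Perm X)ᵈᵐᵃ f) = Nat.card {g : X → ι // histogram g = histogram f} := by
    rw [orbit_domMulAct_eq]; rfl
  rw [← hstab, ← horbit, ← Nat.card_prod,
    Nat.card_congr (orbitProdStabilizerEquivGroup _ f), Nat.card_congr DomMulAct.mk.symm,
    Nat.card_eq_fintype_card, Fintype.card_perm]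

theorem card_histogram_eq_mul_factorial_pow_le [Fintype ι] (a : ι → ℕ) :
    Nat.card {g : X → ι // histogram g = a} *
        ((Fintype.card X / Fintype.card ι)!) ^ Fintype.card ι ≤ (Fintype.card X)! := by
  classical
  rcases isEmpty_or_nonempty {g : X → ι // histogram g = a} with h | ⟨f, rfl⟩
  · simp
  rw [← card_histogram_eq_mul_prod_factorial f, ← sum_histogram f]
  exact Nat.mul_le_mul_left _ (factorial_sum_div_card_pow_le_prod_factorial _)

theorem card_pi_histogram_eq_mul_factorial_pow_le {κ : Type*} [Fintype κ] [Fintype ι]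
    (s : κ → ι → ℕ) :
    Nat.card {g : κ → X → ι // ∀ k i, histogram (g k) i = s k i} *
        ((Fintype.card X / Fintype.card ι)!) ^ (Fintype.card ι * Fintype.card κ) ≤
      (Fintype.card X)! ^ Fintype.card κ := by
  have e : {g : κ → X → ι // ∀ k i, histogram (g k) i = s k i} ≃
      ∀ k, {f : X → ι // histogram f = s k} :=
    subtypePiEquivPi.trans (piCongrRight fun _ => subtypeEquivRight fun _ => funext_iff.symm)
  rw [Nat.card_congr e, Nat.card_pi, pow_mul, ← Finset.card_univ (α := κ), ← prod_const,
    ← prod_const, ← prod_mul_distrib]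
  exact prod_le_prod' fun k _ => card_histogram_eq_mul_factorial_pow_le (s k)

end Histogram

theorem stmt_12_general (M F d K : ℕ) (s : Fin K → Fin d → ℕ) :
    (Nat.card {g : Fin K → Fin M × Fin F → Fin d //
        ∀ k i, (Finset.univ.filter (fun p => g k p = i)).card = s k i} : ℝ)
        / (d : ℝ) ^ (M * F * K)
      ≤ (((M * F).factorial : ℝ)
          / (((M * F / d).factorial : ℝ) ^ d * (d : ℝ) ^ (M * F))) ^ K := by
  have hcount : ((M * F / d)!) ^ (d * K) * Nat.card {g : Fin K → Fin M × Fin F → Fin d //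
      ∀ k i, (Finset.univ.filter (fun p => g k p = i)).card = s k i} ≤ (M * F)! ^ K := by
    have h := card_pi_histogram_eq_mul_factorial_pow_le (X := Fin M × Fin F) s
    simp only [Fintype.card_prod, Fintype.card_fin] at h
    rw [mul_comm]
    exact h
  have hfact : (0 : ℝ) < ((M * F / d)! : ℝ) ^ (d * K) := by positivity
  rw [div_pow, mul_pow, ← pow_mul, ← pow_mul, ← mul_div_mul_left _ _ hfact.ne']
  exact div_le_div_of_nonneg_right (by exact_mod_cast hcount) (by positivity)

/-- With `M` users each sending `F` uniform one-hot updates over `d`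
coordinates, independently over `K` independent iterations (modeled by a uniformly
random `g : Fin K → Fin M × Fin F → Fin d`), the probability that the observed
coordinatewise sums equal a fixed sequence `s^1,…,s^K` (each of ℓ1-norm `MF`)
is at most `p(M,F,d)^K`, where `p(m,f,d) = (mf)!/((⌊mf/d⌋!)^d * d^(mf))`. -/
theorem stmt_12 (M F d K : ℕ) (hM : 1 ≤ M) (hF : 1 ≤ F) (hd : 1 ≤ d) (hK : 1 ≤ K)
    (s : Fin K → Fin d → ℕ) (hs : ∀ k, ∑ i, s k i = M * F) :
    (Nat.card {g : Fin K → Fin M × Fin F → Fin d //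
        ∀ k i, (Finset.univ.filter (fun p => g k p = i)).card = s k i} : ℝ)
        / (d : ℝ) ^ (M * F * K)
      ≤ (((M * F).factorial : ℝ)
          / (((M * F / d).factorial : ℝ) ^ d * (d : ℝ) ^ (M * F))) ^ K :=
  stmt_12_general M F d K s
end
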